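/- Let ψ ∈ L²(ℝ²) and let j ≥ 0 be an integer. Then the closed linear span of {D_{2^j} (T^t_{(k,l)})^{2^{-2j}} ψ : k, l ∈ ℤ} in L²(ℝ²) equals the closed linear span of {T^t_{(k',l')} D_{2^j} (T^t_{(k,l)})^{2^{-2j}} ψ : k', l' ∈ ℤ, k, l ∈ {0, 1, ..., 2^j − 1}}. -/

import Mathlib

/-!
Conjugating by the dilation `D_a` with `λ a² = 1` turns the twisted translation `T^t_{(k',l')}`
into a phase times the `λ`-twisted translation by `a (k', l')`:
`T^t_{(k',l')} D_a (T^t_{(k,l)})^λ = c D_a (T^t_{(a k' + k, a l' + l)})^λ` with `|c| = 1`.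
For `a = 2^j` the map `(k', l', k, l) ↦ (2^j k' + k, 2^j l' + l)` is a bijection
`ℤ² × {0, …, 2^j - 1}² → ℤ²`, so the two generating families agree up to nonzero scalars and span
the same subspace.
-/

open MeasureTheory Complex

noncomputable section

/-- The `λ`-twisted translation `(T^t_{(k,l)})^λ f (x,y) = e^{πiλ(xl - yk)} f(x-k, y-l)`. -/
def twistedTranslate (lam : ℝ) (k l : ℤ) (f : ℝ × ℝ → ℂ) : ℝ × ℝ → ℂ :=
  fun p => Complex.exp ((↑(Real.pi * lam * (p.1 * l - p.2 * k)) : ℂ) * Complex.I) *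
    f (p.1 - k, p.2 - l)

/-- The dilation `D_a f (x,y) = a f(ax, ay)`. -/
def dilate (a : ℝ) (f : ℝ × ℝ → ℂ) : ℝ × ℝ → ℂ :=
  fun p => (a : ℂ) * f (a * p.1, a * p.2)

/-- The kernel `K^λ_g(ξ,η) = ∫_ℝ g(x, η-ξ) e^{πiλx(η+ξ)} dx` of the Weyl transform `W_λ(g)`. -/
def weylKernel (lam : ℝ) (g : ℝ × ℝ → ℂ) (ξ η : ℝ) : ℂ :=
  ∫ x : ℝ, g (x, η - ξ) * Complex.exp ((↑(Real.pi * lam * x * (η + ξ)) : ℂ) * Complex.I)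

lemma memℒp_unimodular_mul {e f : ℝ × ℝ → ℂ} (he : AEStronglyMeasurable e volume)
    (hnorm : ∀ x, ‖e x‖ = 1) (hf : MemLp f 2 (volume : Measure (ℝ × ℝ))) :
    MemLp (fun x => e x * f x) 2 volume := by
  refine ⟨he.mul hf.1, ?_⟩
  have h : eLpNorm (fun x => e x * f x) 2 volume = eLpNorm f 2 volume := by
    apply eLpNorm_congr_norm_ae
    filter_upwards with x
    rw [norm_mul, hnorm x, one_mul]
  rw [h]; exact hf.2

lemma memℒp_twistedTranslate (lam : ℝ) (k l : ℤ) {f : ℝ × ℝ → ℂ}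
    (hf : MemLp f 2 (volume : Measure (ℝ × ℝ))) :
    MemLp (twistedTranslate lam k l f) 2 volume := by
  have hmp : MeasurePreserving (fun p : ℝ × ℝ => p - ((k : ℝ), (l : ℝ))) volume volume :=
    measurePreserving_sub_right volume _
  have h2 : MemLp (fun p : ℝ × ℝ => f (p.1 - k, p.2 - l)) 2 volume := by
    have := hf.comp_measurePreserving hmp
    simpa [Function.comp_def, Prod.sub_def] using this
  have he : AEStronglyMeasurable (fun p : ℝ × ℝ =>
      Complex.exp ((↑(Real.pi * lam * (p.1 * l - p.2 * k)) : ℂ) * Complex.I)) volume := by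
    apply Continuous.aestronglyMeasurable
    fun_prop
  exact memℒp_unimodular_mul he (fun x => Complex.norm_exp_ofReal_mul_I _) h2

lemma memℒp_dilate {a : ℝ} (ha : a ≠ 0) {f : ℝ × ℝ → ℂ}
    (hf : MemLp f 2 (volume : Measure (ℝ × ℝ))) :
    MemLp (dilate a f) 2 volume := by
  have hmap : Measure.map (fun p : ℝ × ℝ => a • p) (volume : Measure (ℝ × ℝ)) =
      ENNReal.ofReal |(a ^ Module.finrank ℝ (ℝ × ℝ))⁻¹| • volume :=
    Measure.map_addHaar_smul volume ha
  have hmem : MemLp f 2 (Measure.map (fun p : ℝ × ℝ => a • p) (volume : Measure (ℝ × ℝ))) := by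
    rw [hmap]
    exact hf.smul_measure (by finiteness)
  have hcomp : MemLp (f ∘ fun p : ℝ × ℝ => a • p) 2 (volume : Measure (ℝ × ℝ)) :=
    (memLp_map_measure_iff hmem.1 (by fun_prop)).mp hmem
  have h : MemLp (fun p : ℝ × ℝ => f (a * p.1, a * p.2)) 2 volume := hcomp
  exact h.const_mul (a : ℂ)

/-- The twisted translation as an operator on `L²(ℝ²)`. -/
def twistedTranslateLp (lam : ℝ) (k l : ℤ) (f : Lp ℂ 2 (volume : Measure (ℝ × ℝ))) :
    Lp ℂ 2 (volume : Measure (ℝ × ℝ)) :=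
  (memℒp_twistedTranslate lam k l (Lp.memLp f)).toLp _

/-- The dilation as an operator on `L²(ℝ²)` (with junk value `0` for `a = 0`). -/
def dilateLp (a : ℝ) (f : Lp ℂ 2 (volume : Measure (ℝ × ℝ))) :
    Lp ℂ 2 (volume : Measure (ℝ × ℝ)) :=
  if ha : a = 0 then 0 else (memℒp_dilate ha (Lp.memLp f)).toLp _

theorem Submodule.span_range_eq_of_eq_smul_comp_equiv {R M ι κ : Type*} [Semiring R]
    [AddCommMonoid M] [Module R M] {f : ι → M} {g : κ → M} (e : κ ≃ ι)
    (h : ∀ q, ∃ c : Rˣ, g q = c • f (e q)) :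
    Submodule.span R (Set.range g) = Submodule.span R (Set.range f) := by
  apply le_antisymm <;> rw [Submodule.span_le] <;> rintro _ ⟨i, rfl⟩
  · obtain ⟨c, hc⟩ := h i
    rw [hc]
    exact Submodule.smul_mem _ _ (Submodule.subset_span ⟨e i, rfl⟩)
  · obtain ⟨q, rfl⟩ := e.surjective i
    obtain ⟨c, hc⟩ := h q
    rw [← inv_smul_smul c (f (e q)), ← hc]
    exact Submodule.smul_mem _ _ (Submodule.subset_span ⟨q, rfl⟩)

lemma twistedTranslate_congr_ae (lam : ℝ) (k l : ℤ) {g h : ℝ × ℝ → ℂ}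
    (hgh : g =ᵐ[volume] h) :
    twistedTranslate lam k l g =ᵐ[volume] twistedTranslate lam k l h := by
  have hq := (measurePreserving_sub_right (volume : Measure (ℝ × ℝ))
    ((k : ℝ), (l : ℝ))).quasiMeasurePreserving.ae_eq_comp hgh
  filter_upwards [hq] with p hp
  simp only [Function.comp_apply, Prod.sub_def] at hp
  simp only [twistedTranslate, hp]

lemma dilate_congr_ae {a : ℝ} (ha : a ≠ 0) {g h : ℝ × ℝ → ℂ}
    (hgh : g =ᵐ[volume] h) :
    dilate a g =ᵐ[volume] dilate a h := by
  have hqmp : Measure.QuasiMeasurePreserving (fun p : ℝ × ℝ => a • p) volume volume := by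
    refine ⟨by fun_prop, ?_⟩
    rw [Measure.map_addHaar_smul volume ha]
    exact Measure.smul_absolutelyContinuous
  filter_upwards [hqmp.ae_eq_comp hgh] with p hp
  exact congrArg ((a : ℂ) * ·) hp

lemma coeFn_twistedTranslateLp (lam : ℝ) (k l : ℤ) (F : Lp ℂ 2 (volume : Measure (ℝ × ℝ))) :
    twistedTranslateLp lam k l F =ᵐ[volume] twistedTranslate lam k l F :=
  MemLp.coeFn_toLp _

lemma coeFn_dilateLp {a : ℝ} (ha : a ≠ 0) (F : Lp ℂ 2 (volume : Measure (ℝ × ℝ))) :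
    dilateLp a F =ᵐ[volume] dilate a F := by
  rw [dilateLp, dif_neg ha]
  exact MemLp.coeFn_toLp _

lemma coeFn_dilateLp_twistedTranslateLp {a : ℝ} (ha : a ≠ 0) (lam : ℝ) (k l : ℤ)
    (F : Lp ℂ 2 (volume : Measure (ℝ × ℝ))) :
    dilateLp a (twistedTranslateLp lam k l F) =ᵐ[volume] dilate a (twistedTranslate lam k l F) :=
  (coeFn_dilateLp ha _).trans (dilate_congr_ae ha (coeFn_twistedTranslateLp lam k l F))

lemma twistedTranslate_one_dilate_twistedTranslate {lam a : ℝ} (hla : lam * a ^ 2 = 1)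
    (k l k' l' K L : ℤ) (hK : (K : ℝ) = a * k' + k) (hL : (L : ℝ) = a * l' + l)
    (f : ℝ × ℝ → ℂ) :
    twistedTranslate 1 k' l' (dilate a (twistedTranslate lam k l f)) =
      Complex.exp (↑(Real.pi * lam * a * (l' * k - k' * l)) * Complex.I) •
        dilate a (twistedTranslate lam K L f) := by
  funext p
  have harg : (a * (p.1 - k') - k, a * (p.2 - l') - l) = (a * p.1 - K, a * p.2 - L) := by
    rw [hK, hL]; ext <;> ring
  have hphase : Complex.exp (↑(Real.pi * 1 * (p.1 * l' - p.2 * k')) * Complex.I) *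
      Complex.exp (↑(Real.pi * lam * (a * (p.1 - k') * l - a * (p.2 - l') * k)) * Complex.I) =
      Complex.exp (↑(Real.pi * lam * a * (l' * k - k' * l)) * Complex.I) *
      Complex.exp (↑(Real.pi * lam * (a * p.1 * L - a * p.2 * K)) * Complex.I) := by
    rw [← Complex.exp_add, ← Complex.exp_add]
    congr 1
    have hlaC : (lam : ℂ) * a ^ 2 = 1 := by exact_mod_cast hla
    have hKC : (K : ℂ) = a * k' + k := by exact_mod_cast hK
    have hLC : (L : ℂ) = a * l' + l := by exact_mod_cast hL
    push_cast
    linear_combination (Real.pi * (p.2 * k' - p.1 * l') * I : ℂ) * hlaC -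
      (Real.pi * lam * a * p.1 * I : ℂ) * hLC + (Real.pi * lam * a * p.2 * I : ℂ) * hKC
  simp only [twistedTranslate, dilate, Pi.smul_apply, smul_eq_mul, harg]
  linear_combination (a * f (a * p.1 - K, a * p.2 - L) : ℂ) * hphase

lemma twistedTranslateLp_one_dilateLp_twistedTranslateLp {lam a : ℝ} (ha : a ≠ 0)
    (hla : lam * a ^ 2 = 1) (k l k' l' K L : ℤ) (hK : (K : ℝ) = a * k' + k)
    (hL : (L : ℝ) = a * l' + l) (F : Lp ℂ 2 (volume : Measure (ℝ × ℝ))) :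
    twistedTranslateLp 1 k' l' (dilateLp a (twistedTranslateLp lam k l F)) =
      Complex.exp (↑(Real.pi * lam * a * (l' * k - k' * l)) * Complex.I) •
        dilateLp a (twistedTranslateLp lam K L F) := by
  apply Lp.ext
  refine (coeFn_twistedTranslateLp _ _ _ _).trans
    ((twistedTranslate_congr_ae _ _ _ (coeFn_dilateLp_twistedTranslateLp ha _ _ _ _)).trans ?_)
  rw [twistedTranslate_one_dilate_twistedTranslate hla k l k' l' K L hK hL]
  refine .trans ?_ (Lp.coeFn_smul _ _).symm
  filter_upwards [coeFn_dilateLp_twistedTranslateLp ha lam K L F] with p hp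
  simp only [Pi.smul_apply, hp]

/-- For `ψ ∈ L²(ℝ²)` and an integer `j ≥ 0`, the closed linear span of
`{D_{2^j} (T^t_{(k,l)})^{2^{-2j}} ψ : k, l ∈ ℤ}` equals the closed linear span of
`{T^t_{(k',l')} D_{2^j} (T^t_{(k,l)})^{2^{-2j}} ψ : k', l' ∈ ℤ, k, l ∈ {0, ..., 2^j - 1}}`. -/
theorem statement_9 (ψ : ℝ × ℝ → ℂ) (hψ : MemLp ψ 2 (volume : Measure (ℝ × ℝ))) (j : ℕ) :
    (Submodule.span ℂ (Set.range fun kl : ℤ × ℤ =>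
        dilateLp ((2 : ℝ) ^ j) (twistedTranslateLp ((2 : ℝ) ^ (-(2 * (j : ℤ)))) kl.1 kl.2
          (hψ.toLp ψ)))).topologicalClosure =
      (Submodule.span ℂ (Set.range fun q : (ℤ × ℤ) × Fin (2 ^ j) × Fin (2 ^ j) =>
        twistedTranslateLp 1 q.1.1 q.1.2
          (dilateLp ((2 : ℝ) ^ j) (twistedTranslateLp ((2 : ℝ) ^ (-(2 * (j : ℤ))))
            ((q.2.1 : ℕ) : ℤ) ((q.2.2 : ℕ) : ℤ) (hψ.toLp ψ))))).topologicalClosure := by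
  have hla : (2 : ℝ) ^ (-(2 * (j : ℤ))) * ((2 : ℝ) ^ j) ^ 2 = 1 := by
    rw [← zpow_natCast, ← zpow_natCast, ← zpow_mul, ← zpow_add₀ two_ne_zero]
    ring_nf; exact zpow_zero _
  let e : (ℤ × ℤ) × Fin (2 ^ j) × Fin (2 ^ j) ≃ ℤ × ℤ :=
    (Equiv.prodProdProdComm _ _ _ _).trans
      ((Int.divModEquiv (2 ^ j)).symm.prodCongr (Int.divModEquiv (2 ^ j)).symm)
  refine congrArg _ (Submodule.span_range_eq_of_eq_smul_comp_equiv e fun q => ?_).symm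
  refine ⟨Units.mk0 _ (Complex.exp_ne_zero _),
    twistedTranslateLp_one_dilateLp_twistedTranslateLp (by positivity) hla _ _ _ _ _ _ ?_ ?_ _⟩
    <;> simp [e] <;> ring
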